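/- arXiv:2109.03175 — 3 statements merged into one kernel-verified Lean document; each statement's English description precedes it below -/
import Mathlib

section
/- The supremum of ‖x − y‖₁ over all pairs x, y in the closed Euclidean ball of radius C in ℝⁿ equals 2C√n. -/
/-! Cauchy–Schwarz gives `‖z‖₁ ≤ √n ‖z‖₂`, and the triangle inequality gives `‖x - y‖₂ ≤ 2C` on
the ball, so `2C√n` is an upper bound. It is attained at the antipodal points `±(C/√n, …, C/√n)`. -/

open Finset

section

variable {ι : Type*} [Fintype ι]

lemma sqrt_sum_sq_eq_norm_toLp (x : ι → ℝ) : √(∑ i, x i ^ 2) = ‖WithLp.toLp 2 x‖ := by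
  simp [EuclideanSpace.norm_eq]

lemma sqrt_sum_sq_sub_le (x y : ι → ℝ) :
    √(∑ i, (x i - y i) ^ 2) ≤ √(∑ i, x i ^ 2) + √(∑ i, y i ^ 2) := by
  have hsub := sqrt_sum_sq_eq_norm_toLp (x - y)
  simp only [Pi.sub_apply] at hsub
  rw [hsub, sqrt_sum_sq_eq_norm_toLp, sqrt_sum_sq_eq_norm_toLp, WithLp.toLp_sub]
  exact norm_sub_le _ _

lemma sum_abs_le_sqrt_card_mul_sqrt_sum_sq (z : ι → ℝ) :
    ∑ i, |z i| ≤ √(Fintype.card ι) * √(∑ i, z i ^ 2) := by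
  rw [← Real.sqrt_mul (Nat.cast_nonneg _)]
  apply Real.le_sqrt_of_sq_le
  simpa [sq_abs] using sq_sum_le_card_mul_sum_sq (s := univ) (f := fun i => |z i|)

lemma sum_abs_sub_le_of_sqrt_sum_sq_le {C : ℝ} {x y : ι → ℝ}
    (hx : √(∑ i, x i ^ 2) ≤ C) (hy : √(∑ i, y i ^ 2) ≤ C) :
    ∑ i, |x i - y i| ≤ 2 * C * √(Fintype.card ι) :=
  calc ∑ i, |x i - y i| ≤ √(Fintype.card ι) * √(∑ i, (x i - y i) ^ 2) :=
        sum_abs_le_sqrt_card_mul_sqrt_sum_sq _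
    _ ≤ √(Fintype.card ι) * (2 * C) := by
        gcongr
        linarith [sqrt_sum_sq_sub_le x y]
    _ = 2 * C * √(Fintype.card ι) := mul_comm _ _

lemma sqrt_sum_sq_const_div_sqrt_card_le {C : ℝ} (hC : 0 ≤ C) :
    √(∑ _i : ι, (C / √(Fintype.card ι)) ^ 2) ≤ C := by
  rw [Real.sqrt_le_left hC, sum_const, card_univ, nsmul_eq_mul, div_pow,
    Real.sq_sqrt (Nat.cast_nonneg _)]
  rcases eq_or_ne (Fintype.card ι : ℝ) 0 with hk | hk
  · rw [hk, zero_mul]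
    positivity
  · rw [mul_div_cancel₀ _ hk]

lemma sum_abs_sub_neg_const_div_sqrt_card {C : ℝ} (hC : 0 ≤ C) :
    ∑ _i : ι, |C / √(Fintype.card ι) - -(C / √(Fintype.card ι))| =
      2 * C * √(Fintype.card ι) := by
  rw [sub_neg_eq_add, ← two_mul, abs_of_nonneg (by positivity), sum_const, card_univ,
    nsmul_eq_mul]
  calc _ = 2 * C * (Fintype.card ι / √(Fintype.card ι)) := by ring
    _ = _ := by rw [Real.div_sqrt]

end

theorem sup_l1_dist_ball_general (n : ℕ) (C : ℝ) (hC : 0 < C) :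
    IsLUB {d : ℝ | ∃ x y : Fin n → ℝ,
        Real.sqrt (∑ i, (x i) ^ 2) ≤ C ∧ Real.sqrt (∑ i, (y i) ^ 2) ≤ C ∧
        d = ∑ i, |x i - y i|} (2 * C * Real.sqrt n) := by
  refine IsGreatest.isLUB ⟨?_, ?_⟩
  · refine ⟨fun _ => C / √n, fun _ => -(C / √n), ?_, ?_, ?_⟩
    · simpa using sqrt_sum_sq_const_div_sqrt_card_le (ι := Fin n) hC.le
    · simpa [neg_sq] using sqrt_sum_sq_const_div_sqrt_card_le (ι := Fin n) hC.le
    · simpa using (sum_abs_sub_neg_const_div_sqrt_card (ι := Fin n) hC.le).symm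
  · rintro d ⟨x, y, hx, hy, rfl⟩
    simpa using sum_abs_sub_le_of_sqrt_sum_sq_le hx hy

theorem sup_l1_dist_ball (n : ℕ) (hn : 1 ≤ n) (C : ℝ) (hC : 0 < C) :
    IsLUB {d : ℝ | ∃ x y : Fin n → ℝ,
        Real.sqrt (∑ i, (x i) ^ 2) ≤ C ∧ Real.sqrt (∑ i, (y i) ^ 2) ≤ C ∧
        d = ∑ i, |x i - y i|} (2 * C * Real.sqrt n) :=
  sup_l1_dist_ball_general n C hC
end

section
/- The ℓ1-sensitivity of the ℓ2-clipping function f(r) = r · min(1, C/‖r‖₂) on ℝⁿ, defined as sup over pairs x, y of ‖f(x) − f(y)‖₁, equals 2C√n. -/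
/-!
By Cauchy–Schwarz the ℓ1 norm of a vector in `ℝⁿ` is at most `√n` times its ℓ2 norm, and a
clipped vector has ℓ2 norm at most `C`; the triangle inequality then bounds the sensitivity by
`2C√n`. The bound is attained by the constant vectors `±C/√n`, which have ℓ2 norm `C` and are
therefore fixed by clipping.
-/

open Finset Real

section Clip

variable {ι : Type*} [Fintype ι]

noncomputable def l2Norm (r : ι → ℝ) : ℝ := √(∑ j, r j ^ 2)

noncomputable def clip (C : ℝ) (r : ι → ℝ) : ι → ℝ :=
  if r = 0 then 0 else fun i => r i * min 1 (C / l2Norm r)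

lemma l2Norm_nonneg (r : ι → ℝ) : 0 ≤ l2Norm r := sqrt_nonneg _

lemma eq_zero_of_l2Norm_eq_zero {r : ι → ℝ} (h : l2Norm r = 0) : r = 0 := by
  have hsum : ∑ j, r j ^ 2 = 0 :=
    le_antisymm (sqrt_eq_zero'.mp h) (sum_nonneg fun j _ => sq_nonneg _)
  ext j
  simpa using (sum_eq_zero_iff_of_nonneg fun j _ => sq_nonneg (r j)).mp hsum j (mem_univ j)

lemma l2Norm_mul_const (r : ι → ℝ) (m : ℝ) : l2Norm (fun i => r i * m) = l2Norm r * |m| := by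
  simp only [l2Norm, mul_pow, ← sum_mul, sqrt_mul (sum_nonneg fun j _ => sq_nonneg (r j)),
    sqrt_sq_eq_abs]

lemma l2Norm_const (c : ℝ) : l2Norm (fun _ : ι => c) = √(Fintype.card ι) * |c| := by
  simp only [l2Norm, sum_const, card_univ, nsmul_eq_mul,
    sqrt_mul (Nat.cast_nonneg _), sqrt_sq_eq_abs]

lemma clip_apply (C : ℝ) (r : ι → ℝ) (i : ι) : clip C r i = r i * min 1 (C / l2Norm r) := by
  unfold clip
  split_ifs with h <;> simp [h]

lemma l2Norm_clip_le {C : ℝ} (hC : 0 ≤ C) (r : ι → ℝ) : l2Norm (clip C r) ≤ C := by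
  have hm : 0 ≤ min 1 (C / l2Norm r) := le_min zero_le_one (by positivity [l2Norm_nonneg r])
  rw [funext (clip_apply C r), l2Norm_mul_const, abs_of_nonneg hm]
  rcases (l2Norm_nonneg r).eq_or_lt with hr | hr
  · rw [← hr, zero_mul]; exact hC
  · calc l2Norm r * min 1 (C / l2Norm r) ≤ l2Norm r * (C / l2Norm r) := by
          gcongr; exact min_le_right _ _
      _ = C := mul_div_cancel₀ C hr.ne'

lemma clip_eq_self {C : ℝ} {r : ι → ℝ} (h : l2Norm r ≤ C) : clip C r = r := by
  rcases (l2Norm_nonneg r).eq_or_lt with hr | hr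
  · -- `C / 0 = 0` in the formula, so this case needs the `r = 0` branch of `clip`
    simp [clip, eq_zero_of_l2Norm_eq_zero hr.symm]
  · ext i
    rw [clip_apply, min_eq_left ((one_le_div hr).mpr h), mul_one]

lemma sum_abs_le_sqrt_card_mul_l2Norm (r : ι → ℝ) :
    ∑ i, |r i| ≤ √(Fintype.card ι) * l2Norm r := by
  rw [l2Norm, ← sqrt_mul (Nat.cast_nonneg _)]
  refine le_trans (le_abs_self _) (abs_le_sqrt ?_)
  simpa only [sq_abs, card_univ] using sq_sum_le_card_mul_sum_sq (s := univ) (f := fun i => |r i|)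

lemma sum_abs_clip_le {C : ℝ} (hC : 0 ≤ C) (r : ι → ℝ) :
    ∑ i, |clip C r i| ≤ √(Fintype.card ι) * C :=
  (sum_abs_le_sqrt_card_mul_l2Norm _).trans (by gcongr; exact l2Norm_clip_le hC r)

end Clip

theorem clip_sensitivity_general (n : ℕ) (C : ℝ) (hC : 0 < C)
    (f : (Fin n → ℝ) → (Fin n → ℝ))
    (hf : ∀ r : Fin n → ℝ, f r =
      if r = 0 then 0
      else fun i => r i * min 1 (C / Real.sqrt (∑ j, (r j) ^ 2))) :
    IsLUB {d : ℝ | ∃ x y : Fin n → ℝ, d = ∑ i, |f x i - f y i|}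
      (2 * C * Real.sqrt n) := by
  obtain rfl : f = clip C := funext hf
  refine IsGreatest.isLUB ⟨?_, ?_⟩
  · set c := C / √n
    have hc : 0 ≤ c := by positivity
    have hcC : √n * c ≤ C := by
      rcases (sqrt_nonneg (n : ℝ)).eq_or_lt with hn | hn
      · rw [← hn, zero_mul]; exact hC.le
      · exact (mul_div_cancel₀ C hn.ne').le
    have clip_const : ∀ a : ℝ, |a| = c → clip C (fun _ : Fin n => a) = fun _ => a :=
      fun a ha => clip_eq_self (by rwa [l2Norm_const, Fintype.card_fin, ha])
    refine ⟨fun _ => c, fun _ => -c, ?_⟩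
    rw [clip_const c (abs_of_nonneg hc), clip_const (-c) (by rw [abs_neg, abs_of_nonneg hc])]
    simp only [sub_neg_eq_add, sum_const, card_univ, Fintype.card_fin, nsmul_eq_mul, c]
    rw [abs_of_nonneg (by positivity),
      show (n : ℝ) * (C / √n + C / √n) = 2 * C * (n / √n) by ring, div_sqrt]
  · rintro d ⟨x, y, rfl⟩
    calc ∑ i, |clip C x i - clip C y i| ≤ ∑ i, (|clip C x i| + |clip C y i|) :=
          sum_le_sum fun i _ => abs_sub _ _
      _ = (∑ i, |clip C x i|) + ∑ i, |clip C y i| := sum_add_distrib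
      _ ≤ √n * C + √n * C := by
          simpa only [Fintype.card_fin] using
            add_le_add (sum_abs_clip_le hC.le x) (sum_abs_clip_le hC.le y)
      _ = 2 * C * √n := by ring

theorem clip_sensitivity (n : ℕ) (hn : 1 ≤ n) (C : ℝ) (hC : 0 < C)
    (f : (Fin n → ℝ) → (Fin n → ℝ))
    (hf : ∀ r : Fin n → ℝ, f r =
      if r = 0 then 0
      else fun i => r i * min 1 (C / Real.sqrt (∑ j, (r j) ^ 2))) :
    IsLUB {d : ℝ | ∃ x y : Fin n → ℝ, d = ∑ i, |f x i - f y i|}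
      (2 * C * Real.sqrt n) :=
  clip_sensitivity_general n C hC f hf
end

section
/- If the Laplace mechanism on the range of the ℓ2-clipping function uses scale b = 2C/ε, then the ε-DP inequality fails: there exist points x, y in the Euclidean ball of radius C in ℝ² and a point z ∈ ℝ² such that the density ratio p_x(z)/p_y(z) > exp(ε). -/
/-!
The density ratio of two product Laplace densities with scale `2C/ε` is
`exp (ε/(2C) · (‖y - z‖₁ - ‖x - z‖₁))`, so `ε`-DP would need the ℓ¹-diameter of the clipping range
to be at most `2C`. But the Euclidean ball of radius `C` in `ℝ²` has ℓ¹-diameter `2√2 C`: the points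
`±(2C/3, 2C/3)` lie in it at ℓ¹-distance `8C/3`, and taking `z = x` gives the ratio `exp (4ε/3)`.
-/

open Real

lemma Real.sqrt_sum_const_sq (ι : Type*) [Fintype ι] (c : ℝ) :
    √(∑ _i : ι, c ^ 2) = √(Fintype.card ι) * |c| := by
  simp [Real.sqrt_mul, Real.sqrt_sq_eq_abs]

lemma prod_mul_exp_div_prod_mul_exp {ι : Type*} [Fintype ι] {a : ℝ} (ha : a ≠ 0)
    (f g : ι → ℝ) :
    (∏ i, a * exp (f i)) / ∏ i, a * exp (g i) = exp (∑ i, (f i - g i)) := by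
  rw [Finset.prod_mul_distrib, Finset.prod_mul_distrib, ← exp_sum, ← exp_sum,
    mul_div_mul_left _ _ (Finset.prod_ne_zero_iff.mpr fun _ _ => ha), ← exp_sub,
    Finset.sum_sub_distrib]

theorem adept_dp_fails (C ε : ℝ) (hC : 0 < C) (hε : 0 < ε) :
    ∃ x y z : Fin 2 → ℝ,
      Real.sqrt (∑ i, (x i) ^ 2) ≤ C ∧ Real.sqrt (∑ i, (y i) ^ 2) ≤ C ∧
      (∏ i, ε / (4 * C) * Real.exp (-(ε * |x i - z i|) / (2 * C))) /
        (∏ i, ε / (4 * C) * Real.exp (-(ε * |y i - z i|) / (2 * C))) >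
      Real.exp ε := by
  have hsqrt2 : √2 * (2 * C / 3) ≤ C := by
    nlinarith [Real.sq_sqrt (zero_le_two : (0 : ℝ) ≤ 2), Real.sqrt_nonneg 2]
  refine ⟨fun _ => -(2 * C / 3), fun _ => 2 * C / 3, fun _ => -(2 * C / 3), ?_, ?_, ?_⟩
  · rw [Real.sqrt_sum_const_sq, abs_neg, abs_of_pos (by positivity)]
    simpa using hsqrt2
  · rw [Real.sqrt_sum_const_sq, abs_of_pos (by positivity)]
    simpa using hsqrt2
  · rw [gt_iff_lt, prod_mul_exp_div_prod_mul_exp (by positivity), exp_lt_exp]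
    have hdist : |2 * C / 3 - -(2 * C / 3)| = 4 * C / 3 := by
      rw [abs_of_pos (by linarith)]; ring
    simp only [sub_self, abs_zero, hdist, Finset.sum_const, Finset.card_univ, Fintype.card_fin,
      nsmul_eq_mul, Nat.cast_ofNat, mul_zero, neg_zero, zero_div]
    field_simp
    linarith
end
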